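/- Fix 3 ≤ k ≤ n-2 ≤ q-2, S = {a_1,...,a_n} ⊆ F_q distinct, v ∈ (F_q^*)^n. Let g(x) = g_{k+1} x^{k+1} + g_{k-1} x^{k-1} + f(x) with g_{k+1} ∈ F_q^*, g_{k-1} ∈ F_q, f ∈ V_k, and set w = (v_1 g(a_1),...,v_n g(a_n), u_{n+1} v_{n+1}). Then w is a deep hole of C_k(S,v,∞) if and only if g_{k-1} is not in the union of the set {g_{k+1}(σ_2(T) - σ_1(T)^2) + (u_{n+1} v_{n+1} - f_k) σ_1(T) : T ⊆ S, |T| = k} and the set {g_{k+1} σ_2(T) : T ⊆ S, |T| = k+1}, where f_k is the coefficient of x^k in f. -/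

import Mathlib

open Finset Polynomial

section Defs
variable {F : Type*} [Field F] [DecidableEq F]

noncomputable def minWt {n : ℕ} (C : Submodule F (Fin n → F)) : ℕ :=
  sInf {w | ∃ c ∈ C, c ≠ 0 ∧ hammingNorm c = w}

noncomputable def distToCode {n : ℕ} (C : Submodule F (Fin n → F)) (u : Fin n → F) : ℕ :=
  sInf {d | ∃ c ∈ C, hammingDist u c = d}

noncomputable def covRad {n : ℕ} (C : Submodule F (Fin n → F)) : ℕ :=
  sSup {d | ∃ u : Fin n → F, distToCode C u = d}

def IsDeepHole {n : ℕ} (C : Submodule F (Fin n → F)) (u : Fin n → F) : Prop :=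
  distToCode C u = covRad C

def dualCode {n : ℕ} (C : Submodule F (Fin n → F)) : Submodule F (Fin n → F) where
  carrier := {x | ∀ c ∈ C, ∑ i, x i * c i = 0}
  zero_mem' := by intro c _; simp
  add_mem' := by
    intro a b ha hb c hc
    have h1 := ha c hc
    have h2 := hb c hc
    simp only [Pi.add_apply, add_mul, Finset.sum_add_distrib, h1, h2, add_zero]
  smul_mem' := by
    intro r x hx c hc
    have h := hx c hc
    simp only [Pi.smul_apply, smul_eq_mul, mul_assoc, ← Finset.mul_sum, h, mul_zero]

noncomputable def extMap {n : ℕ} (u : Fin n → F) :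
    ((Fin n → F) × F) →ₗ[F] (Fin (n + 1) → F) where
  toFun p := Fin.snoc (p.1 + p.2 • u) p.2
  map_add' p q := by
    funext i
    refine Fin.lastCases ?_ (fun j => ?_) i
    · simp [Fin.snoc_last]
    · simp only [Fin.snoc_castSucc, Prod.fst_add, Prod.snd_add, Pi.add_apply, Pi.smul_apply, smul_eq_mul, add_smul]
      ring
  map_smul' r p := by
    funext i
    refine Fin.lastCases ?_ (fun j => ?_) i
    · simp [Fin.snoc_last]
    · simp only [Fin.snoc_castSucc, Prod.smul_fst, Prod.smul_snd, Pi.add_apply,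
        Pi.smul_apply, smul_eq_mul, RingHom.id_apply]
      ring

noncomputable def extCode {n : ℕ} (C : Submodule F (Fin n → F)) (u : Fin n → F) :
    Submodule F (Fin (n + 1) → F) :=
  Submodule.map (extMap u) (C.prod ⊤)

end Defs
section Defs
variable {F : Type*} [Field F] [DecidableEq F]

def Vspace (F : Type*) [Field F] (k : ℕ) : Submodule F (Polynomial F) where
  carrier := {f | f.coeff (k - 1) = 0 ∧ ∀ j, k < j → f.coeff j = 0}
  zero_mem' := by simp
  add_mem' := by
    rintro f g ⟨hf1, hf2⟩ ⟨hg1, hg2⟩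
    exact ⟨by simp [hf1, hg1], fun j hj => by simp [hf2 j hj, hg2 j hj]⟩
  smul_mem' := by
    rintro r f ⟨hf1, hf2⟩
    exact ⟨by simp [hf1], fun j hj => by simp [hf2 j hj]⟩

noncomputable def esgrsMap {n : ℕ} (k : ℕ) (a v : Fin n → F) :
    Polynomial F →ₗ[F] (Fin (n + 1) → F) where
  toFun f := Fin.snoc (fun j => v j * f.eval (a j)) (f.coeff k)
  map_add' f g := by
    funext i
    refine Fin.lastCases ?_ (fun j => ?_) i
    · simp [Fin.snoc_last]
    · simp [Fin.snoc_castSucc, mul_add]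
  map_smul' r f := by
    funext i
    refine Fin.lastCases ?_ (fun j => ?_) i
    · simp [Fin.snoc_last]
    · simp only [Fin.snoc_castSucc, Pi.smul_apply, smul_eq_mul, eval_smul,
        RingHom.id_apply]
      ring

noncomputable def esgrs {n : ℕ} (k : ℕ) (a v : Fin n → F) :
    Submodule F (Fin (n + 1) → F) :=
  Submodule.map (esgrsMap k a v) (Vspace F k)

end Defs

section Aux
set_option linter.unusedSectionVars false
variable {F : Type*} [Field F] [DecidableEq F] {n : ℕ}


lemma monic_prodXsubC (a : Fin n → F) (T : Finset (Fin n)) :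
    (∏ j ∈ T, (X - C (a j))).Monic :=
  monic_prod_of_monic _ _ fun _ _ => monic_X_sub_C _

lemma natDegree_prodXsubC (a : Fin n → F) (T : Finset (Fin n)) :
    (∏ j ∈ T, (X - C (a j))).natDegree = T.card := by
  rw [natDegree_prod_of_monic _ _ fun _ _ => monic_X_sub_C _]
  simp [natDegree_X_sub_C]

lemma coeff_prodXsubC_card (a : Fin n → F) (T : Finset (Fin n)) :
    (∏ j ∈ T, (X - C (a j))).coeff T.card = 1 := by
  have := (monic_prodXsubC a T).coeff_natDegree
  rwa [natDegree_prodXsubC] at this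

lemma coeff_prodXsubC_gt (a : Fin n → F) (T : Finset (Fin n)) {m : ℕ} (hm : T.card < m) :
    (∏ j ∈ T, (X - C (a j))).coeff m = 0 :=
  coeff_eq_zero_of_natDegree_lt (by rwa [natDegree_prodXsubC])

-- key vanishing lemma
lemma eq_of_eval_eq (a : Fin n → F) (ha : Function.Injective a) (p q : Polynomial F)
    (T : Finset (Fin n)) (hroots : ∀ j ∈ T, p.eval (a j) = q.eval (a j))
    (hcoeff : ∀ m, T.card ≤ m → p.coeff m = q.coeff m) : p = q := by
  refine Polynomial.eq_of_degree_sub_lt_of_eval_index_eq T (Set.injOn_of_injective ha) ?_ hroots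
  refine (Polynomial.degree_lt_iff_coeff_zero _ _).2 fun m hm => ?_
  rw [coeff_sub, hcoeff m (by exact_mod_cast hm), sub_self]

lemma sum_powersetCard_one (T : Finset (Fin n)) (a : Fin n → F) :
    ∑ p ∈ T.powersetCard 1, ∏ j ∈ p, a j = ∑ j ∈ T, a j := by
  rw [Finset.powersetCard_one, Finset.sum_map]
  simp

lemma coeff_linear_mul (b c : F) (P : Polynomial F) (m : ℕ) :
    ((C b * X + C c) * P).coeff (m + 1) = b * P.coeff m + c * P.coeff (m + 1) := by
  rw [add_mul, coeff_add, mul_assoc, coeff_C_mul, coeff_C_mul, coeff_X_mul]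

lemma coeff_prodXsubC (a : Fin n → F) (T : Finset (Fin n)) {m : ℕ} (hm : m ≤ T.card) :
    (∏ j ∈ T, (X - C (a j))).coeff m =
      (-1) ^ (T.card - m) * ∑ p ∈ T.powersetCard (T.card - m), ∏ j ∈ p, a j := by
  have h1 : (∏ j ∈ T, (X - C (a j))) = ((T.val.map a).map fun t => X - C t).prod := by
    rw [Multiset.map_map]; rfl
  rw [h1, Multiset.prod_X_sub_C_coeff _ (by simpa using hm)]
  rw [Multiset.card_map, Finset.esymm_map_val]
  rfl

lemma coeff_prodXsubC_pred (a : Fin n → F) (T : Finset (Fin n)) (hT : 1 ≤ T.card) :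
    (∏ j ∈ T, (X - C (a j))).coeff (T.card - 1) = -∑ j ∈ T, a j := by
  rw [coeff_prodXsubC a T (Nat.sub_le _ _), Nat.sub_sub_self hT, sum_powersetCard_one]
  ring

lemma caseA (a : Fin n → F) (ha : Function.Injective a) {k : ℕ} (hk : 1 ≤ k)
    (gkp1 : F) (p : Polynomial F) (T : Finset (Fin n)) (hT : T.card = k + 1)
    (hp1 : p.coeff (k + 1) = gkp1) (hgt : ∀ m, k + 1 < m → p.coeff m = 0)
    (hroots : ∀ j ∈ T, p.eval (a j) = 0) :
    p.coeff (k - 1) = gkp1 * ∑ q ∈ T.powersetCard 2, ∏ j ∈ q, a j := by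
  have hfac : p = C gkp1 * ∏ j ∈ T, (X - C (a j)) := by
    refine eq_of_eval_eq a ha _ _ T (fun j hj => ?_) (fun m hm => ?_)
    · rw [hroots j hj, eval_mul, eval_prod, Finset.prod_eq_zero hj (by simp)]; ring
    · rw [hT] at hm; rcases eq_or_lt_of_le hm with h | h
      · rw [← h, hp1, coeff_C_mul, ← hT, coeff_prodXsubC_card, mul_one]
      · rw [hgt m h, coeff_C_mul, coeff_prodXsubC_gt a T (by omega), mul_zero]
  rw [hfac, coeff_C_mul, coeff_prodXsubC a T (by omega), hT,
    show k + 1 - (k - 1) = 2 by omega]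
  norm_num

lemma caseB (a : Fin n → F) (ha : Function.Injective a) {k : ℕ} (hk : 2 ≤ k)
    (gkp1 : F) (p : Polynomial F) (T : Finset (Fin n)) (hT : T.card = k)
    (hp1 : p.coeff (k + 1) = gkp1) (hgt : ∀ m, k + 1 < m → p.coeff m = 0)
    (hroots : ∀ j ∈ T, p.eval (a j) = 0) :
    p.coeff (k - 1) = gkp1 * ((∑ q ∈ T.powersetCard 2, ∏ j ∈ q, a j) - (∑ j ∈ T, a j) ^ 2)
      - p.coeff k * ∑ j ∈ T, a j := by
  obtain ⟨k', rfl⟩ : ∃ k', k = k' + 2 := ⟨k - 2, by omega⟩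
  have hc1 : (∏ j ∈ T, (X - C (a j))).coeff (k' + 1) = -∑ j ∈ T, a j := by
    have := coeff_prodXsubC_pred a T (by omega); rwa [hT] at this
  have hck : (∏ j ∈ T, (X - C (a j))).coeff (k' + 2) = 1 := by
    have := coeff_prodXsubC_card a T; rwa [hT] at this
  have hc2 : (∏ j ∈ T, (X - C (a j))).coeff k' =
      ∑ q ∈ T.powersetCard 2, ∏ j ∈ q, a j := by
    rw [coeff_prodXsubC a T (by omega), hT, show k' + 2 - k' = 2 by omega]
    norm_num
  have hfac : p = (C gkp1 * X + C (p.coeff (k' + 2) + gkp1 * ∑ j ∈ T, a j)) *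
      ∏ j ∈ T, (X - C (a j)) := by
    refine eq_of_eval_eq a ha _ _ T (fun j hj => ?_) (fun m hm => ?_)
    · rw [hroots j hj, eval_mul, eval_prod, Finset.prod_eq_zero hj (by simp)]; ring
    · rw [hT] at hm
      obtain ⟨m', rfl⟩ : ∃ m', m = m' + 1 := ⟨m - 1, by omega⟩
      rw [coeff_linear_mul]
      rcases eq_or_lt_of_le hm with h | h
      · have hm' : m' = k' + 1 := by omega
        subst hm'
        rw [hc1, hck]; ring
      rcases eq_or_lt_of_le (show k' + 2 + 1 ≤ m' + 1 by omega) with h2 | h2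
      · have hm' : m' = k' + 2 := by omega
        subst hm'
        rw [hp1, hck, coeff_prodXsubC_gt a T (by omega)]; ring
      · rw [hgt _ (by omega), coeff_prodXsubC_gt a T (by omega),
          coeff_prodXsubC_gt a T (by omega)]; ring
  have key : p.coeff (k' + 2 - 1) = gkp1 * (∏ j ∈ T, (X - C (a j))).coeff k' +
      (p.coeff (k' + 2) + gkp1 * ∑ j ∈ T, a j) * (∏ j ∈ T, (X - C (a j))).coeff (k' + 1) := by
    conv_lhs => rw [hfac]
    rw [show k' + 2 - 1 = k' + 1 from rfl, coeff_linear_mul]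
  rw [key, hc1, hc2]; ring

lemma dist_add_agree {N : ℕ} (u c : Fin N → F) :
    hammingDist u c + #(Finset.univ.filter fun i => u i = c i) = N := by
  have := Finset.card_filter_add_card_filter_not
    (s := (Finset.univ : Finset (Fin N))) (p := fun i => u i = c i)
  simp only [Finset.card_univ, Fintype.card_fin] at this
  rw [hammingDist, add_comm]
  convert this using 2

lemma agree_card_snoc (x y : Fin n → F) (s t : F) :
    #(Finset.univ.filter fun i => (Fin.snoc x s : Fin (n+1) → F) i = (Fin.snoc y t : Fin (n+1) → F) i)
      = #(Finset.univ.filter fun j => x j = y j) + (if s = t then 1 else 0) := by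
  rw [Finset.card_filter, Finset.card_filter, Fin.sum_univ_castSucc]
  simp [Fin.snoc_castSucc, Fin.snoc_last]

lemma card_eval_zero_le (a : Fin n → F) (ha : Function.Injective a)
    (p : Polynomial F) (hp : p ≠ 0) :
    #(Finset.univ.filter fun j => p.eval (a j) = 0) ≤ p.natDegree := by
  have h1 : #(Finset.univ.filter fun j => p.eval (a j) = 0) ≤ p.roots.toFinset.card := by
    refine Finset.card_le_card_of_injOn a (fun j hj => ?_)
      (Set.injOn_of_injective ha |>.mono (Set.subset_univ _))
    simp only [Finset.mem_coe, Finset.mem_filter] at hj ⊢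
    rw [Multiset.mem_toFinset, mem_roots hp]
    exact hj.2
  exact h1.trans ((p.roots.toFinset_card_le).trans p.card_roots')

section Codes
variable {N : ℕ} (C : Submodule F (Fin N → F))

lemma distToCode_le (u c : Fin N → F) (hc : c ∈ C) : distToCode C u ≤ hammingDist u c :=
  Nat.sInf_le ⟨c, hc, rfl⟩

lemma le_distToCode (u : Fin N → F) (m : ℕ) (h : ∀ c ∈ C, m ≤ hammingDist u c) :
    m ≤ distToCode C u :=
  le_csInf ⟨hammingDist u 0, 0, C.zero_mem, rfl⟩ (by rintro d ⟨c, hc, rfl⟩; exact h c hc)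

lemma distToCode_le_card (u : Fin N → F) : distToCode C u ≤ N := by
  refine (distToCode_le C u 0 C.zero_mem).trans ?_
  simpa using (hammingDist_le_card_fintype (x := u) (y := 0))

lemma covRad_le (m : ℕ) (hb : ∀ u : Fin N → F, distToCode C u ≤ m) : covRad C ≤ m :=
  csSup_le ⟨distToCode C 0, 0, rfl⟩ (by rintro d ⟨u, rfl⟩; exact hb u)

lemma le_covRad (u : Fin N → F) : distToCode C u ≤ covRad C :=
  le_csSup ⟨N, by rintro d ⟨w, rfl⟩; exact distToCode_le_card C w⟩ ⟨u, rfl⟩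

end Codes

end Aux
section ESGRS
set_option linter.unusedSectionVars false
variable {F : Type*} [Field F] [DecidableEq F] {n k : ℕ}

lemma esgrsMap_apply (a v : Fin n → F) (h : Polynomial F) :
    esgrsMap k a v h = Fin.snoc (fun j => v j * h.eval (a j)) (h.coeff k) := rfl

lemma distToCode_esgrs_le (hk : 3 ≤ k) (hkn : k + 2 ≤ n)
    (a v : Fin n → F) (ha : Function.Injective a) (hv : ∀ j, v j ≠ 0)
    (u : Fin (n + 1) → F) : distToCode (esgrs k a v) u ≤ n + 1 - k := by
  obtain ⟨S0, -, hS0⟩ := Finset.exists_subset_card_eq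
    (s := (Finset.univ : Finset (Fin n))) (n := k - 1) (by simp; omega)
  set r : Fin n → F := fun j => u (Fin.castSucc j) / v j - u (Fin.last n) * (a j) ^ k with hr
  set L := Lagrange.interpolate S0 a r with hL
  have hinj : Set.InjOn a S0 := (Set.injOn_of_injective ha).mono (Set.subset_univ _)
  have hLdeg : L.degree < ((k - 1 : ℕ) : WithBot ℕ) := by
    have := Lagrange.degree_interpolate_lt (v := a) r hinj
    rwa [hS0] at this
  set h := L + Polynomial.C (u (Fin.last n)) * Polynomial.X ^ k with hh
  have hcoeffL : ∀ m, k - 1 ≤ m → L.coeff m = 0 := fun m hm =>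
    Polynomial.coeff_eq_zero_of_degree_lt (hLdeg.trans_le (by exact_mod_cast hm))
  have hhV : h ∈ Vspace F k := by
    refine ⟨?_, fun m hm => ?_⟩
    · simp [hh, Polynomial.coeff_X_pow, hcoeffL (k-1) le_rfl, show k - 1 ≠ k by omega ]
    · simp [hh, Polynomial.coeff_X_pow, hcoeffL m (by omega), Nat.ne_of_gt hm]
  have hck : h.coeff k = u (Fin.last n) := by
    simp [hh, Polynomial.coeff_X_pow, hcoeffL k (by omega)]
  have heval : ∀ j ∈ S0, h.eval (a j) = u (Fin.castSucc j) / v j := by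
    intro j hj
    rw [hh]
    simp only [Polynomial.eval_add, Polynomial.eval_mul, Polynomial.eval_C,
      Polynomial.eval_pow, Polynomial.eval_X, hL]
    rw [Lagrange.eval_interpolate_at_node r hinj hj, hr]
    ring
  refine (distToCode_le _ u _ (Submodule.mem_map.2 ⟨h, hhV, rfl⟩)).trans ?_
  have hagree := dist_add_agree u (esgrsMap k a v h)
  have hsub : insert (Fin.last n) (S0.image Fin.castSucc) ⊆
      Finset.univ.filter (fun i => u i = esgrsMap k a v h i) := by
    intro i hi
    rcases Finset.mem_insert.1 hi with rfl | hi
    · simp only [Finset.mem_filter, Finset.mem_univ, true_and, esgrsMap_apply,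
        Fin.snoc_last, hck]
    · obtain ⟨j, hj, rfl⟩ := Finset.mem_image.1 hi
      rw [Finset.mem_filter]
      simp only [Finset.mem_filter, Finset.mem_univ, true_and, esgrsMap_apply,
        Fin.snoc_castSucc]
      rw [heval j hj, mul_comm, div_mul_cancel₀ _ (hv j)]
  have hcard : k ≤ #(Finset.univ.filter (fun i => u i = esgrsMap k a v h i)) := by
    refine le_trans ?_ (Finset.card_le_card hsub)
    rw [Finset.card_insert_of_notMem, Finset.card_image_of_injective _ (Fin.castSucc_injective n), hS0]
    · omega
    · simp only [Finset.mem_image]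
      rintro ⟨j, -, hj⟩
      exact (Fin.castSucc_lt_last j).ne hj
  omega

lemma agree_card_G (a v : Fin n → F) (hv : ∀ j, v j ≠ 0) (G : Polynomial F) (t : F)
    (h : Polynomial F) :
    #(Finset.univ.filter fun i =>
        (Fin.snoc (fun j => v j * G.eval (a j)) t : Fin (n + 1) → F) i = esgrsMap k a v h i)
      = #(Finset.univ.filter fun j => (G - h).eval (a j) = 0)
        + (if h.coeff k = t then 1 else 0) := by
  rw [esgrsMap_apply, agree_card_snoc]
  congr 1
  · congr 1
    refine Finset.filter_congr fun j _ => ?_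
    rw [mul_right_inj' (hv j), Polynomial.eval_sub, sub_eq_zero]
  · simp only [eq_comm]

lemma esgrs_dist_eq (a v : Fin n → F) (hv : ∀ j, v j ≠ 0) (G : Polynomial F) (t : F)
    (h : Polynomial F) :
    hammingDist (Fin.snoc (fun j => v j * G.eval (a j)) t : Fin (n + 1) → F)
        (esgrsMap k a v h)
      + (#(Finset.univ.filter fun j => (G - h).eval (a j) = 0)
        + (if h.coeff k = t then 1 else 0)) = n + 1 := by
  rw [← agree_card_G a v hv G t h]
  exact dist_add_agree _ _

lemma covRad_esgrs (hk : 3 ≤ k) (hkn : k + 2 ≤ n)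
    (a v : Fin n → F) (ha : Function.Injective a) (hv : ∀ j, v j ≠ 0) :
    covRad (esgrs k a v) = n + 1 - k := by
  refine le_antisymm (covRad_le _ _ (distToCode_esgrs_le hk hkn a v ha hv)) ?_
  set G : Polynomial F := Polynomial.X ^ (k - 1) with hG
  set u0 : Fin (n + 1) → F := Fin.snoc (fun j => v j * G.eval (a j)) 0 with hu0
  have hge : n + 1 - k ≤ distToCode (esgrs k a v) u0 := by
    refine le_distToCode _ _ _ ?_
    rintro c hc
    obtain ⟨h, hhV, rfl⟩ := Submodule.mem_map.1 hc
    have hagree := esgrs_dist_eq (k := k) a v hv G 0 h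
    have hbound : #(Finset.univ.filter fun j => (G - h).eval (a j) = 0)
        + (if h.coeff k = 0 then 1 else 0) ≤ k := by
      have hpne : G - h ≠ 0 := by
        intro hz
        have : (G - h).coeff (k - 1) = 0 := by rw [hz]; simp
        rw [Polynomial.coeff_sub, hG, Polynomial.coeff_X_pow, hhV.1] at this
        simp at this
      by_cases hc0 : h.coeff k = 0
      · have hdeg : (G - h).natDegree ≤ k - 1 := by
          refine Polynomial.natDegree_le_iff_coeff_eq_zero.2 fun m hm => ?_
          rw [Polynomial.coeff_sub, hG, Polynomial.coeff_X_pow, if_neg (by omega)]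
          rcases eq_or_lt_of_le (show k ≤ m by omega) with rfl | hlt
          · rw [hc0]; ring
          · rw [hhV.2 m hlt]; ring
        have := (card_eval_zero_le a ha _ hpne).trans hdeg
        simp only [if_pos hc0]
        omega
      · have hdeg : (G - h).natDegree ≤ k := by
          refine Polynomial.natDegree_le_iff_coeff_eq_zero.2 fun m hm => ?_
          rw [Polynomial.coeff_sub, hG, Polynomial.coeff_X_pow, if_neg (by omega),
            hhV.2 m hm]
          ring
        have := (card_eval_zero_le a ha _ hpne).trans hdeg
        simp only [if_neg hc0]
        omega
    rw [hu0]
    omega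
  have hle := distToCode_esgrs_le hk hkn a v ha hv u0
  have heq : distToCode (esgrs k a v) u0 = n + 1 - k := le_antisymm hle hge
  rw [← heq]
  exact le_covRad _ _

lemma core_iff (hk : 3 ≤ k) (hkn : k + 2 ≤ n)
    (a v : Fin n → F) (ha : Function.Injective a) (hv : ∀ j, v j ≠ 0)
    (gkp1 : F) (hgp : gkp1 ≠ 0) (gkm1 : F) (f : Polynomial F) (hf : f ∈ Vspace F k)
    (ulast vlast : F) :
    (∀ h ∈ Vspace F k,
        #(Finset.univ.filter fun j =>
          ((Polynomial.C gkp1 * Polynomial.X ^ (k + 1) +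
            Polynomial.C gkm1 * Polynomial.X ^ (k - 1) + f) - h).eval (a j) = 0)
          + (if h.coeff k = ulast * vlast then 1 else 0) ≤ k)
      ↔ ((∀ T : Finset (Fin n), T.card = k →
          gkm1 ≠ gkp1 * ((∑ p ∈ T.powersetCard 2, ∏ j ∈ p, a j) - (∑ j ∈ T, a j) ^ 2) +
            (ulast * vlast - f.coeff k) * ∑ j ∈ T, a j) ∧
        (∀ T : Finset (Fin n), T.card = k + 1 →
          gkm1 ≠ gkp1 * ∑ p ∈ T.powersetCard 2, ∏ j ∈ p, a j)) := by
  set gpoly := Polynomial.C gkp1 * Polynomial.X ^ (k + 1) +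
    Polynomial.C gkm1 * Polynomial.X ^ (k - 1) + f with hgpoly
  have hgc : ∀ m, gpoly.coeff m =
      (if m = k + 1 then gkp1 else 0) + (if m = k - 1 then gkm1 else 0) + f.coeff m := by
    intro m
    simp [hgpoly, Polynomial.coeff_add, Polynomial.coeff_C_mul, Polynomial.coeff_X_pow]
  constructor
  · intro H
    constructor
    · intro T hT
      by_contra heq
      set s1 := ∑ j ∈ T, a j with hs1
      set cc := f.coeff k - ulast * vlast + gkp1 * s1 with hcc
      set q := (Polynomial.C gkp1 * Polynomial.X + Polynomial.C cc) *
        ∏ j ∈ T, (Polynomial.X - Polynomial.C (a j)) with hq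
      have hprodk : (∏ j ∈ T, (Polynomial.X - Polynomial.C (a j))).coeff k = 1 := by
        have := coeff_prodXsubC_card a T; rwa [hT] at this
      have hprodk1 : (∏ j ∈ T, (Polynomial.X - Polynomial.C (a j))).coeff (k - 1) = -s1 := by
        have := coeff_prodXsubC_pred a T (by omega); rwa [hT] at this
      have hprodk2 : (∏ j ∈ T, (Polynomial.X - Polynomial.C (a j))).coeff (k - 2) =
          ∑ p ∈ T.powersetCard 2, ∏ j ∈ p, a j := by
        rw [coeff_prodXsubC a T (by omega), hT, show k - (k - 2) = 2 by omega]
        norm_num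
      have hqk1 : q.coeff (k + 1) = gkp1 := by
        rw [hq, coeff_linear_mul, hprodk, coeff_prodXsubC_gt a T (by omega)]
        ring
      have hqk : q.coeff k = f.coeff k - ulast * vlast := by
        have : q.coeff (k - 1 + 1) = gkp1 *
            (∏ j ∈ T, (Polynomial.X - Polynomial.C (a j))).coeff (k - 1) + cc *
            (∏ j ∈ T, (Polynomial.X - Polynomial.C (a j))).coeff (k - 1 + 1) := by
          rw [hq, coeff_linear_mul]
        rw [show k - 1 + 1 = k by omega] at this
        rw [this, hprodk1, hprodk, hcc]
        ring
      have hqkm1 : q.coeff (k - 1) = gkm1 := by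
        have : q.coeff (k - 2 + 1) = gkp1 *
            (∏ j ∈ T, (Polynomial.X - Polynomial.C (a j))).coeff (k - 2) + cc *
            (∏ j ∈ T, (Polynomial.X - Polynomial.C (a j))).coeff (k - 2 + 1) := by
          rw [hq, coeff_linear_mul]
        rw [show k - 2 + 1 = k - 1 by omega] at this
        rw [this, hprodk1, hprodk2, heq, hcc]
        ring
      have hqgt : ∀ m, k + 1 < m → q.coeff m = 0 := by
        intro m hm
        obtain ⟨m', rfl⟩ : ∃ m', m = m' + 1 := ⟨m - 1, by omega⟩
        rw [hq, coeff_linear_mul, coeff_prodXsubC_gt a T (by omega),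
          coeff_prodXsubC_gt a T (by omega)]
        ring
      set h := gpoly - q with hh
      have hsub : gpoly - h = q := by rw [hh]; ring
      have hhV : h ∈ Vspace F k := by
        constructor
        · rw [hh, Polynomial.coeff_sub, hgc, hqkm1, if_neg (by omega), if_pos rfl, hf.1]
          ring
        · intro m hm
          rcases eq_or_lt_of_le (show k + 1 ≤ m by omega) with rfl | hlt
          · rw [hh, Polynomial.coeff_sub, hgc, if_pos rfl, if_neg (by omega),
              hf.2 _ (by omega), hqk1]
            ring
          · rw [hh, Polynomial.coeff_sub, hgc, if_neg (by omega), if_neg (by omega),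
              hf.2 m (by omega), hqgt m hlt]
            ring
      have hck : h.coeff k = ulast * vlast := by
        rw [hh, Polynomial.coeff_sub, hgc, if_neg (by omega), if_neg (by omega), hqk]
        ring
      have hroots : T ⊆ Finset.univ.filter fun j => (gpoly - h).eval (a j) = 0 := by
        intro j hj
        rw [Finset.mem_filter]
        refine ⟨Finset.mem_univ _, ?_⟩
        rw [hsub, hq, Polynomial.eval_mul, Polynomial.eval_prod,
          Finset.prod_eq_zero hj (by simp)]
        ring
      have := H h hhV
      rw [if_pos hck] at this
      have := (Finset.card_le_card hroots).trans_eq rfl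
      omega
    · intro T hT
      by_contra heq
      set q := Polynomial.C gkp1 * ∏ j ∈ T, (Polynomial.X - Polynomial.C (a j)) with hq
      have hqk1 : q.coeff (k + 1) = gkp1 := by
        rw [hq, Polynomial.coeff_C_mul]
        have := coeff_prodXsubC_card a T; rw [hT] at this
        rw [this]; ring
      have hqkm1 : q.coeff (k - 1) = gkm1 := by
        rw [hq, Polynomial.coeff_C_mul, coeff_prodXsubC a T (by omega), hT,
          show k + 1 - (k - 1) = 2 by omega]
        rw [heq]; norm_num
      have hqgt : ∀ m, k + 1 < m → q.coeff m = 0 := by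
        intro m hm
        rw [hq, Polynomial.coeff_C_mul, coeff_prodXsubC_gt a T (by omega)]
        ring
      set h := gpoly - q with hh
      have hsub : gpoly - h = q := by rw [hh]; ring
      have hhV : h ∈ Vspace F k := by
        constructor
        · rw [hh, Polynomial.coeff_sub, hgc, hqkm1, if_neg (by omega), if_pos rfl, hf.1]
          ring
        · intro m hm
          rcases eq_or_lt_of_le (show k + 1 ≤ m by omega) with rfl | hlt
          · rw [hh, Polynomial.coeff_sub, hgc, if_pos rfl, if_neg (by omega),
              hf.2 _ (by omega), hqk1]
            ring
          · rw [hh, Polynomial.coeff_sub, hgc, if_neg (by omega), if_neg (by omega),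
              hf.2 m (by omega), hqgt m hlt]
            ring
      have hroots : T ⊆ Finset.univ.filter fun j => (gpoly - h).eval (a j) = 0 := by
        intro j hj
        rw [Finset.mem_filter]
        refine ⟨Finset.mem_univ _, ?_⟩
        rw [hsub, hq, Polynomial.eval_mul, Polynomial.eval_prod,
          Finset.prod_eq_zero hj (by simp)]
        ring
      have := H h hhV
      have := Finset.card_le_card hroots
      omega
  · rintro ⟨H1, H2⟩ h hhV
    by_contra hcon
    push_neg at hcon
    set p := gpoly - h with hp
    set E := Finset.univ.filter fun j => p.eval (a j) = 0 with hE
    have hp1 : p.coeff (k + 1) = gkp1 := by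
      rw [hp, Polynomial.coeff_sub, hgc, if_pos rfl, if_neg (by omega),
        hf.2 _ (by omega), hhV.2 _ (by omega)]
      ring
    have hpkm1 : p.coeff (k - 1) = gkm1 := by
      rw [hp, Polynomial.coeff_sub, hgc, if_neg (by omega), if_pos rfl, hf.1, hhV.1]
      ring
    have hpk : p.coeff k = f.coeff k - h.coeff k := by
      rw [hp, Polynomial.coeff_sub, hgc, if_neg (by omega), if_neg (by omega)]
      ring
    have hpgt : ∀ m, k + 1 < m → p.coeff m = 0 := by
      intro m hm
      rw [hp, Polynomial.coeff_sub, hgc, if_neg (by omega), if_neg (by omega),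
        hf.2 m (by omega), hhV.2 m (by omega)]
      ring
    have hpne : p ≠ 0 := fun hz => hgp (by rw [← hp1, hz, Polynomial.coeff_zero])
    have hpdeg : p.natDegree ≤ k + 1 := Polynomial.natDegree_le_iff_coeff_eq_zero.2 hpgt
    have hEcard : #E ≤ k + 1 := (card_eval_zero_le a ha p hpne).trans hpdeg
    have hroots : ∀ j ∈ E, p.eval (a j) = 0 := fun j hj => (Finset.mem_filter.1 hj).2
    rcases eq_or_lt_of_le hEcard with hEk | hEk
    · have := caseA a ha (by omega) gkp1 p E hEk hp1 hpgt hroots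
      exact H2 E hEk (by rw [← hpkm1, this])
    · have hE1 : (if h.coeff k = ulast * vlast then 1 else 0) = 1 := by
        by_cases hck : h.coeff k = ulast * vlast
        · rw [if_pos hck]
        · rw [if_neg hck] at hcon ⊢; omega
      have hck : h.coeff k = ulast * vlast := by
        by_contra hck; rw [if_neg hck] at hE1; omega
      have hEk' : #E = k := by rw [hE1] at hcon; omega
      have := caseB a ha (by omega) gkp1 p E hEk' hp1 hpgt hroots
      refine H1 E hEk' ?_
      rw [← hpkm1, this, hpk, hck]
      ring

end ESGRS

theorem stmt_16 {F : Type*} [Field F] [Fintype F] [DecidableEq F] {n k : ℕ}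
    (hk : 3 ≤ k) (hkn : k + 2 ≤ n) (hn : n ≤ Fintype.card F)
    (a v : Fin n → F) (ha : Function.Injective a) (hv : ∀ j, v j ≠ 0)
    (gkp1 : F) (hgp : gkp1 ≠ 0) (gkm1 : F) (f : Polynomial F) (hf : f ∈ Vspace F k)
    (ulast vlast : F) :
    IsDeepHole (esgrs k a v)
      (Fin.snoc
        (fun j => v j * (Polynomial.C gkp1 * Polynomial.X ^ (k + 1) +
          Polynomial.C gkm1 * Polynomial.X ^ (k - 1) + f).eval (a j))
        (ulast * vlast)) ↔
      ((∀ T : Finset (Fin n), T.card = k →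
          gkm1 ≠ gkp1 * ((∑ p ∈ T.powersetCard 2, ∏ j ∈ p, a j) - (∑ j ∈ T, a j) ^ 2) +
            (ulast * vlast - f.coeff k) * ∑ j ∈ T, a j) ∧
        (∀ T : Finset (Fin n), T.card = k + 1 →
          gkm1 ≠ gkp1 * ∑ p ∈ T.powersetCard 2, ∏ j ∈ p, a j)) := by
  rw [← core_iff hk hkn a v ha hv gkp1 hgp gkm1 f hf ulast vlast]
  unfold IsDeepHole
  rw [covRad_esgrs hk hkn a v ha hv]
  have hle := distToCode_esgrs_le hk hkn a v ha hv
    (Fin.snoc (fun j => v j * (Polynomial.C gkp1 * Polynomial.X ^ (k + 1) +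
      Polynomial.C gkm1 * Polynomial.X ^ (k - 1) + f).eval (a j)) (ulast * vlast))
  constructor
  · intro hdeep h hhV
    have hdist := distToCode_le (esgrs k a v) (Fin.snoc (fun j => v j *
        (Polynomial.C gkp1 * Polynomial.X ^ (k + 1) +
          Polynomial.C gkm1 * Polynomial.X ^ (k - 1) + f).eval (a j)) (ulast * vlast))
      _ (Submodule.mem_map.2 ⟨h, hhV, rfl⟩)
    have heqd := esgrs_dist_eq (k := k) a v hv
      (Polynomial.C gkp1 * Polynomial.X ^ (k + 1) +
        Polynomial.C gkm1 * Polynomial.X ^ (k - 1) + f) (ulast * vlast) h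
    omega
  · intro H
    refine le_antisymm hle (le_distToCode _ _ _ ?_)
    rintro c hc
    obtain ⟨h, hhV, rfl⟩ := Submodule.mem_map.1 hc
    have heqd := esgrs_dist_eq (k := k) a v hv
      (Polynomial.C gkp1 * Polynomial.X ^ (k + 1) +
        Polynomial.C gkm1 * Polynomial.X ^ (k - 1) + f) (ulast * vlast) h
    have hb := H h hhV
    omega
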